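/- With μ, Δ_n^ℓ, ℘_n^ℓ as above, the identity ℘_n^{ℓ−1}(x)·Δ_n^{ℓ+1} + x·Δ_{n+1}^ℓ·℘_{n−1}^ℓ(x) = ℘_n^ℓ(x)·Δ_n^ℓ holds in F[x]. -/

import Mathlib

/-- Shifted Toeplitz determinant `Δ_n^ℓ = det [μ(ℓ + j − i)]_{i,j = 1..n}`, with `Δ_0^ℓ = 1`. -/
noncomputable def Delta {F : Type*} [Field F] (μ : ℤ → F) (n : ℕ) (ℓ : ℤ) : F :=
  (Matrix.of fun i j : Fin n => μ (ℓ + (j : ℤ) - (i : ℤ))).det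

/-- Bordered shifted Toeplitz determinant `℘_n^ℓ(x)`: the (n+1)×(n+1) determinant whose
rows `i = 1..n` are `(μ_{ℓ−i+1}, …, μ_{ℓ−i+1+n})` and whose last row is `(1, x, …, xⁿ)`. -/
noncomputable def wp {F : Type*} [Field F] (μ : ℤ → F) (n : ℕ) (ℓ : ℤ) : Polynomial F :=
  (Matrix.of fun i j : Fin (n + 1) =>
    if (i : ℕ) < n then Polynomial.C (μ (ℓ - (i : ℤ) + (j : ℤ))) else Polynomial.X ^ (j : ℕ)).det

/-!
The identity is a three-term Plücker relation. Let `M` be the moment matrix of size `n + 2` at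
shift `ℓ - 1`, whose rows are `r_0, …, r_{n+1}` with `r_k = (μ_{ℓ-1-k+c})_c`, and let
`[x, y]` be its determinant after replacing the last two rows by `x` and `y`. Then
`[a,b][c,d] - [a,c][b,d] + [a,d][b,c] = 0` for all rows `a, b, c, d`. Taking `a = r_{-1}`,
`b = r_n`, `c = (1, x, …, x^{n+1})` and `d = (1, 0, …, 0)`, the six brackets are, up to signs,
the six determinants of the identity: moving the row `a` to the top gives a moment matrix at
shift `ℓ`, and a Laplace expansion along the row `d` removes the first column, which raises
the shift by one.
-/

open Matrix

namespace Matrix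

theorem submatrix_castSucc_updateRow_castSucc {m : ℕ} {ι ο α : Type*} (A : Matrix (Fin (m + 1)) ι α)
    (k : Fin m) (v : ι → α) (f : ο → ι) :
    (A.updateRow k.castSucc v).submatrix Fin.castSucc f
      = (A.submatrix Fin.castSucc f).updateRow k (v ∘ f) := by
  ext p q
  simp [updateRow_apply]

variable {ι R : Type*} [Fintype ι] [DecidableEq ι] [CommRing R]

theorem sum_det_updateRow_smul (N : Matrix ι ι R) (c : ι → R) :
    ∑ k, (N.updateRow k c).det • N k = N.det • c := by
  ext k'
  simpa [mulVec, dotProduct, cramer_transpose_apply, mul_comm] using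
    congrFun (mulVec_cramer Nᵀ c) k'

theorem det_updateRow_sum_smul {κ : Type*} (A : Matrix ι ι R) (i : ι) (s : Finset κ)
    (f : κ → R) (v : κ → ι → R) :
    (A.updateRow i (∑ k ∈ s, f k • v k)).det = ∑ k ∈ s, f k * (A.updateRow i (v k)).det := by
  let L := (detRowAlternating : (ι → R) [⋀^ι]→ₗ[R] R).toMultilinearMap.toLinearMap A i
  exact (map_sum L (fun k => f k • v k) s).trans (Finset.sum_congr rfl fun k _ => map_smul L _ _)

/-- The bracket `[x, y]` of the Plücker relations. -/
def detWithRows (M : Matrix ι ι R) (i j : ι) (x y : ι → R) : R :=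
  ((M.updateRow j y).updateRow i x).det

variable (M : Matrix ι ι R) {i j : ι}

theorem detWithRows_swap (hij : i ≠ j) (x y : ι → R) :
    M.detWithRows i j x y = -M.detWithRows i j y x := by
  have hswap : ((M.updateRow j x).updateRow i y).submatrix (Equiv.swap i j) id
      = (M.updateRow j y).updateRow i x := by
    ext k l
    rcases eq_or_ne k i with rfl | hki
    · simp [updateRow_apply, hij.symm]
    rcases eq_or_ne k j with rfl | hkj
    · simp [updateRow_apply, hki]
    · simp [Equiv.swap_apply_of_ne_of_ne hki hkj, hki, hkj]
  rw [detWithRows, detWithRows, ← hswap, det_permute, Equiv.Perm.sign_swap hij]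
  simp

theorem detWithRows_row {k : ι} (hki : k ≠ i) (hkj : k ≠ j) (y : ι → R) :
    M.detWithRows i j (M k) y = 0 :=
  det_zero_of_row_eq hki.symm (by simp [hki, hkj])

/-- Expanding `[a,b] • c` along the rows of `N = (M with rows a, b)` and pairing with `d`
leaves only the terms of the rows `a` and `b`, since the other rows of `N` are rows of `M`. -/
theorem detWithRows_plucker (hij : i ≠ j) (a b c d : ι → R) :
    M.detWithRows i j a b * M.detWithRows i j c d
      - M.detWithRows i j a c * M.detWithRows i j b d
      + M.detWithRows i j a d * M.detWithRows i j b c = 0 := by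
  set N := (M.updateRow j b).updateRow i a
  have expand : M.detWithRows i j a b * M.detWithRows i j c d
      = (N.updateRow i c).det * M.detWithRows i j a d
        + (N.updateRow j c).det * M.detWithRows i j b d := by
    calc M.detWithRows i j a b * M.detWithRows i j c d
        = ((M.updateRow j d).updateRow i (N.det • c)).det := by
          rw [det_updateRow_smul]; rfl
      _ = ∑ k, (N.updateRow k c).det * M.detWithRows i j (N k) d := by
          rw [← sum_det_updateRow_smul, det_updateRow_sum_smul _ _ _ _ (fun k => N k)]; rfl
      _ = _ := by
          rw [Fintype.sum_eq_add i j hij]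
          · simp [N, hij.symm]
          rintro k ⟨hki, hkj⟩
          rw [show N k = M k by simp [N, hki, hkj], detWithRows_row M hki hkj, mul_zero]
  have hci : (N.updateRow i c).det = M.detWithRows i j c b := by
    simp [N, detWithRows]
  have hcj : (N.updateRow j c).det = M.detWithRows i j a c := by
    simp [N, detWithRows, updateRow_comm _ hij]
  rw [expand, hci, hcj, detWithRows_swap M hij c b]
  ring

theorem det_updateRow_last_single_zero {m : ℕ} (A : Matrix (Fin (m + 1)) (Fin (m + 1)) R) :
    (A.updateRow (Fin.last m) (Pi.single 0 1)).det
      = (-1) ^ m * (A.submatrix Fin.castSucc Fin.succ).det := by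
  rw [← adjugate_apply, adjugate_fin_succ_eq_det_submatrix]
  simp [Fin.succAbove_last]

end Matrix

section Moments

variable {R : Type*} (ν : ℤ → R)

def momentMatrix (m : ℕ) (ℓ : ℤ) : Matrix (Fin m) (Fin m) R :=
  Matrix.of fun i j => ν (ℓ + j - i)

theorem momentMatrix_submatrix_castSucc_succ (m : ℕ) (ℓ : ℤ) :
    (momentMatrix ν (m + 1) ℓ).submatrix Fin.castSucc Fin.succ = momentMatrix ν m (ℓ + 1) := by
  ext i j
  simp only [momentMatrix, submatrix_apply, of_apply, Fin.val_succ, Fin.val_castSucc]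
  congr 1
  push_cast
  ring

theorem momentMatrix_updateRow_last (n : ℕ) (ℓ : ℤ) :
    (momentMatrix ν (n + 2) ℓ).updateRow (Fin.last (n + 1))
        (momentMatrix ν (n + 2) (ℓ - 1) (Fin.last n).castSucc)
      = momentMatrix ν (n + 2) ℓ := by
  convert updateRow_eq_self (momentMatrix ν (n + 2) ℓ) (Fin.last (n + 1)) using 2
  ext q
  simp only [momentMatrix, of_apply, Fin.val_last, Fin.val_castSucc]
  congr 1
  push_cast
  ring

variable [CommRing R]

def borderedMomentMatrix (m : ℕ) (ℓ : ℤ) (x : R) : Matrix (Fin (m + 1)) (Fin (m + 1)) R :=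
  (momentMatrix ν (m + 1) ℓ).updateRow (Fin.last m) fun j => x ^ (j : ℕ)

variable (n : ℕ) (ℓ : ℤ)

/-- Row `0` of the moment matrix at shift `ℓ` continues the rows of the one at shift `ℓ - 1`
upwards, so moving it to the top is a cyclic permutation of the first `n + 1` rows. -/
theorem detWithRows_momentMatrix_row_zero (y : Fin (n + 2) → R) :
    (momentMatrix ν (n + 2) (ℓ - 1)).detWithRows (Fin.last n).castSucc (Fin.last (n + 1))
        (momentMatrix ν (n + 2) ℓ 0) y
      = (-1) ^ n * ((momentMatrix ν (n + 2) ℓ).updateRow (Fin.last (n + 1)) y).det := by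
  have hrot : ((momentMatrix ν (n + 2) (ℓ - 1)).updateRow (Fin.last (n + 1)) y).updateRow
        (Fin.last n).castSucc (momentMatrix ν (n + 2) ℓ 0)
      = ((momentMatrix ν (n + 2) ℓ).updateRow (Fin.last (n + 1)) y).submatrix
          (Fin.cycleRange (Fin.last n).castSucc) id := by
    ext p q
    refine Fin.lastCases ?_ (fun p => Fin.lastCases ?_ (fun r => ?_) p) p
    · rw [submatrix_apply, Fin.cycleRange_of_gt (Fin.castSucc_lt_last _),
        updateRow_ne (Fin.castSucc_lt_last _).ne']
      simp
    · simp [Fin.cycleRange_self]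
    · have hlt : r.castSucc.castSucc < (Fin.last n).castSucc := by simp [Fin.lt_def]
      rw [submatrix_apply, Fin.cycleRange_of_lt hlt]
      simp [updateRow_apply, hlt.ne, (Fin.castSucc_lt_last _).ne, momentMatrix]
      congr 1
      ring
  rw [detWithRows, hrot, det_permute, Fin.sign_cycleRange]
  simp

theorem detWithRows_momentMatrix_self (y : Fin (n + 2) → R) :
    (momentMatrix ν (n + 2) (ℓ - 1)).detWithRows (Fin.last n).castSucc (Fin.last (n + 1))
        (momentMatrix ν (n + 2) (ℓ - 1) (Fin.last n).castSucc) y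
      = ((momentMatrix ν (n + 2) (ℓ - 1)).updateRow (Fin.last (n + 1)) y).det := by
  unfold detWithRows
  convert congrArg det (updateRow_eq_self _ (Fin.last n).castSucc) using 3
  exact (updateRow_ne (Fin.castSucc_lt_last _).ne).symm

theorem detWithRows_momentMatrix_powers_single (x : R) :
    (momentMatrix ν (n + 2) (ℓ - 1)).detWithRows (Fin.last n).castSucc (Fin.last (n + 1))
        (fun k => x ^ (k : ℕ)) (Pi.single 0 1)
      = (-1) ^ (n + 1) * (x * (borderedMomentMatrix ν n ℓ x).det) := by
  have hpow : (fun k : Fin (n + 2) => x ^ (k : ℕ)) ∘ Fin.succ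
      = x • fun k : Fin (n + 1) => x ^ (k : ℕ) := by
    ext k
    simp [pow_succ']
  rw [detWithRows, ← updateRow_comm _ (Fin.castSucc_lt_last _).ne,
    det_updateRow_last_single_zero, submatrix_castSucc_updateRow_castSucc,
    momentMatrix_submatrix_castSucc_succ, sub_add_cancel, hpow, det_updateRow_smul]
  rfl

theorem det_borderedMomentMatrix_recurrence (x : R) :
    (borderedMomentMatrix ν (n + 1) (ℓ - 1) x).det * (momentMatrix ν (n + 1) (ℓ + 1)).det
      + x * (momentMatrix ν (n + 2) ℓ).det * (borderedMomentMatrix ν n ℓ x).det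
      = (borderedMomentMatrix ν (n + 1) ℓ x).det * (momentMatrix ν (n + 1) ℓ).det := by
  set M := momentMatrix ν (n + 2) (ℓ - 1)
  set i := (Fin.last n).castSucc
  set j := Fin.last (n + 1)
  have hP := M.detWithRows_plucker (i := i) (j := j) (Fin.castSucc_lt_last _).ne
    (momentMatrix ν (n + 2) ℓ 0) (M i) (fun k => x ^ (k : ℕ)) (Pi.single 0 1)
  have hab : M.detWithRows i j (momentMatrix ν (n + 2) ℓ 0) (M i)
      = (-1) ^ n * (momentMatrix ν (n + 2) ℓ).det := by
    rw [detWithRows_momentMatrix_row_zero, momentMatrix_updateRow_last]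
  have hac : M.detWithRows i j (momentMatrix ν (n + 2) ℓ 0) (fun k => x ^ (k : ℕ))
      = (-1) ^ n * (borderedMomentMatrix ν (n + 1) ℓ x).det :=
    detWithRows_momentMatrix_row_zero ν n ℓ _
  have had : M.detWithRows i j (momentMatrix ν (n + 2) ℓ 0) (Pi.single 0 1)
      = (-1) ^ n * ((-1) ^ (n + 1) * (momentMatrix ν (n + 1) (ℓ + 1)).det) := by
    rw [detWithRows_momentMatrix_row_zero, det_updateRow_last_single_zero,
      momentMatrix_submatrix_castSucc_succ]
  have hbc : M.detWithRows i j (M i) (fun k => x ^ (k : ℕ))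
      = (borderedMomentMatrix ν (n + 1) (ℓ - 1) x).det :=
    detWithRows_momentMatrix_self ν n ℓ _
  have hbd : M.detWithRows i j (M i) (Pi.single 0 1)
      = (-1) ^ (n + 1) * (momentMatrix ν (n + 1) ℓ).det := by
    rw [detWithRows_momentMatrix_self, det_updateRow_last_single_zero,
      momentMatrix_submatrix_castSucc_succ, sub_add_cancel]
  have hcd : M.detWithRows i j (fun k => x ^ (k : ℕ)) (Pi.single 0 1)
      = (-1) ^ (n + 1) * (x * (borderedMomentMatrix ν n ℓ x).det) :=
    detWithRows_momentMatrix_powers_single ν n ℓ x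
  rw [hab, hac, had, hbc, hbd, hcd] at hP
  rcases neg_one_pow_eq_or R n with hs | hs <;> rw [pow_succ, hs] at hP <;>
    linear_combination -hP

end Moments

open Polynomial

theorem C_Delta {F : Type*} [Field F] (μ : ℤ → F) (m : ℕ) (ℓ : ℤ) :
    C (Delta μ m ℓ) = (momentMatrix (C ∘ μ) m ℓ).det :=
  RingHom.map_det C _

theorem wp_eq_det_borderedMomentMatrix {F : Type*} [Field F] (μ : ℤ → F) (m : ℕ) (ℓ : ℤ) :
    wp μ m ℓ = (borderedMomentMatrix (C ∘ μ) m ℓ X).det := by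
  rw [wp]
  congr 1
  ext i j
  refine Fin.lastCases ?_ (fun i => ?_) i
  · simp [borderedMomentMatrix]
  · rw [borderedMomentMatrix, updateRow_ne (Fin.castSucc_lt_last i).ne]
    simp only [of_apply, Fin.val_castSucc, i.isLt, if_true, momentMatrix, Function.comp_apply,
      sub_add_eq_add_sub]

/-- `℘_n^{ℓ−1}(x)·Δ_n^{ℓ+1} + x·Δ_{n+1}^ℓ·℘_{n−1}^ℓ(x) = ℘_n^ℓ(x)·Δ_n^ℓ` in `F[x]`
(stated for `n ≥ 1`, i.e. with `n` replaced by `n+1`). -/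
theorem wp_identity_due {F : Type*} [Field F] (μ : ℤ → F) (n : ℕ) (ℓ : ℤ) :
    wp μ (n + 1) (ℓ - 1) * Polynomial.C (Delta μ (n + 1) (ℓ + 1)) +
      Polynomial.X * Polynomial.C (Delta μ (n + 2) ℓ) * wp μ n ℓ =
    wp μ (n + 1) ℓ * Polynomial.C (Delta μ (n + 1) ℓ) := by
  simp only [C_Delta, wp_eq_det_borderedMomentMatrix]
  exact det_borderedMomentMatrix_recurrence (C ∘ μ) n ℓ X
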